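/- Let ψ_c and ψ_j be scale functions. Then ∫₀¹ ψ_c(s)/(s ψ_j(s)) ds < ∞ if and only if ∫₀¹ 1/(ψ_j(ψ_c⁻¹(t))) dt < ∞. -/

import Mathlib

/-!
Let `κ` be the measure `ψc(s) ds / s` on `(0, 1)`. The first integral is `∫ 1 / ψj dκ`, the
second is `∫ 1 / ψj(ψc⁻¹ t) dt` over `(0, 1)`. Both integrands are decreasing, so by the layer-cake
formula it suffices to compare the measures of their superlevel sets, which are initial intervals:
if `ψj m = 1 / l`, the level `l` gives `(0, min 1 m)` for `κ` and `(0, min 1 (ψc m))` for Lebesgue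
measure. The power-type bounds on `ψc` give `κ (0, u) ≍ ψc u`: from above because
`ψc s ≤ C ψc u (s / u) ^ β₁`, from below by doubling on `(u / 2, u)`. Finally
`ψc (min 1 m) = min (ψc 1) (ψc m) ≍ min 1 (ψc m)`.
-/

open Set MeasureTheory
open scoped ENNReal

/-- A scale function: a homeomorphism of `[0,∞)` (encoded as a continuous, strictly
monotone surjection of `Ici 0` onto itself fixing `0`) satisfying the two-sided
power-type doubling estimate with constant `C ≥ 1` and exponents `0 < β₁ ≤ β₂`. -/
def IsScaleFunction (ψ : ℝ → ℝ) (C β₁ β₂ : ℝ) : Prop :=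
  1 ≤ C ∧ 0 < β₁ ∧ β₁ ≤ β₂ ∧ ψ 0 = 0 ∧
  ContinuousOn ψ (Ici 0) ∧ StrictMonoOn ψ (Ici 0) ∧
  (∀ y, 0 ≤ y → ∃ x, 0 ≤ x ∧ ψ x = y) ∧
  ∀ r R : ℝ, 0 < r → r ≤ R →
    C⁻¹ * (R / r) ^ β₁ ≤ ψ R / ψ r ∧ ψ R / ψ r ≤ C * (R / r) ^ β₂

theorem min_le_max_one_mul_min_one {a x : ℝ} (hx : 0 ≤ x) : min a x ≤ max a 1 * min 1 x := by
  rcases le_total x 1 with h | h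
  · rw [min_eq_right h]
    nlinarith [min_le_right a x, le_max_right a 1]
  · rw [min_eq_left h, mul_one]
    exact (min_le_left a x).trans (le_max_left a 1)

theorem min_one_le_max_one_inv_mul_min {a x : ℝ} (ha : 0 < a) (hx : 0 ≤ x) :
    min 1 x ≤ max 1 a⁻¹ * min a x := by
  rcases le_total x a with h | h
  · rw [min_eq_right h]
    nlinarith [min_le_right 1 x, le_max_left 1 a⁻¹]
  · rw [min_eq_left h]
    calc min 1 x ≤ a⁻¹ * a := by rw [inv_mul_cancel₀ ha.ne']; exact min_le_left 1 x
      _ ≤ max 1 a⁻¹ * a := by gcongr; exact le_max_right 1 a⁻¹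

theorem setOf_inter_Ioo_eq_Ioo_min {p : ℝ → Prop} {b m : ℝ} (h : ∀ x, 0 < x → (p x ↔ x < m)) :
    {x | p x} ∩ Ioo 0 b = Ioo 0 (min b m) := by
  ext x
  simp only [mem_inter_iff, mem_ofPred_eq, mem_Ioo, lt_min_iff]
  constructor
  · rintro ⟨hp, hx, hxb⟩
    exact ⟨hx, hxb, (h x hx).1 hp⟩
  · rintro ⟨hx, hxb, hxm⟩
    exact ⟨(h x hx).2 hxm, hx, hxb⟩

theorem setLIntegral_Ioo_rpow_sub_one {β u : ℝ} (hβ : 0 < β) (hu : 0 ≤ u) :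
    ∫⁻ s in Ioo 0 u, ENNReal.ofReal (s ^ (β - 1)) = ENNReal.ofReal (u ^ β / β) := by
  have hint : IntegrableOn (fun s : ℝ => s ^ (β - 1)) (Ioo 0 u) :=
    (intervalIntegral.intervalIntegrable_rpow' (by linarith)).1.mono_set Ioo_subset_Ioc_self
  rw [← ofReal_integral_eq_lintegral_ofReal hint
    (ae_restrict_of_forall_mem measurableSet_Ioo fun s hs => (Real.rpow_pos_of_pos hs.1 _).le),
    ← integral_Ioc_eq_integral_Ioo, ← intervalIntegral.integral_of_le hu,
    integral_rpow (Or.inl (by linarith)), sub_add_cancel, Real.zero_rpow hβ.ne', sub_zero]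

theorem integrableOn_iff_setLIntegral_ofReal_lt_top {α : Type*} [MeasurableSpace α]
    {μ : Measure α} {f : α → ℝ} {s : Set α} (hfm : AEStronglyMeasurable f (μ.restrict s))
    (hf : 0 ≤ᵐ[μ.restrict s] f) :
    IntegrableOn f s μ ↔ ∫⁻ x in s, ENNReal.ofReal (f x) ∂μ < ∞ := by
  rw [lt_top_iff_ne_top, lintegral_ofReal_ne_top_iff_integrable hfm hf, IntegrableOn]

theorem lintegral_ofReal_le_mul_of_meas_lt_le {α β : Type*} [MeasurableSpace α]
    [MeasurableSpace β] {μ : Measure α} {ν : Measure β} {f : α → ℝ} {g : β → ℝ}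
    (hf : 0 ≤ᵐ[μ] f) (hfm : AEMeasurable f μ) (hg : 0 ≤ᵐ[ν] g) (hgm : AEMeasurable g ν)
    {c : ℝ≥0∞} (h : ∀ l > 0, μ {x | l < f x} ≤ c * ν {x | l < g x}) :
    ∫⁻ x, ENNReal.ofReal (f x) ∂μ ≤ c * ∫⁻ x, ENNReal.ofReal (g x) ∂ν := by
  have hanti : Antitone fun l : ℝ => ν {x | l < g x} :=
    fun l l' hll' => measure_mono fun x (hx : l' < g x) => hll'.trans_lt hx
  rw [lintegral_eq_lintegral_meas_lt μ hf hfm, lintegral_eq_lintegral_meas_lt ν hg hgm,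
    ← lintegral_const_mul c hanti.measurable]
  exact setLIntegral_mono' measurableSet_Ioi h

namespace IsScaleFunction

variable {ψ : ℝ → ℝ} {C β₁ β₂ : ℝ}

theorem continuousOn (hψ : IsScaleFunction ψ C β₁ β₂) : ContinuousOn ψ (Ici 0) := hψ.2.2.2.2.1

theorem strictMonoOn (hψ : IsScaleFunction ψ C β₁ β₂) : StrictMonoOn ψ (Ici 0) :=
  hψ.2.2.2.2.2.1

theorem pos (hψ : IsScaleFunction ψ C β₁ β₂) {x : ℝ} (hx : 0 < x) : 0 < ψ x := by
  simpa [hψ.2.2.2.1] using hψ.strictMonoOn (mem_Ici.2 le_rfl) (mem_Ici.2 hx.le) hx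

theorem exists_pos_eq (hψ : IsScaleFunction ψ C β₁ β₂) {y : ℝ} (hy : 0 < y) :
    ∃ x, 0 < x ∧ ψ x = y := by
  obtain ⟨x, hx, rfl⟩ := hψ.2.2.2.2.2.2.1 y hy.le
  refine ⟨x, hx.lt_of_ne ?_, rfl⟩
  rintro rfl
  exact hy.ne' hψ.2.2.2.1

theorem map_min_one (hψ : IsScaleFunction ψ C β₁ β₂) {m : ℝ} (hm : 0 ≤ m) :
    ψ (min 1 m) = min (ψ 1) (ψ m) :=
  hψ.strictMonoOn.monotoneOn.map_min (mem_Ici.2 zero_le_one) hm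

theorem lt_one_div_iff (hψ : IsScaleFunction ψ C β₁ β₂) {l m s : ℝ} (hl : 0 < l)
    (hm : 0 ≤ m) (hψm : ψ m = 1 / l) (hs : 0 < s) : l < 1 / ψ s ↔ s < m := by
  rw [lt_one_div hl (hψ.pos hs), ← hψm, hψ.strictMonoOn.lt_iff_lt hs.le hm]

theorem antitoneOn_one_div (hψ : IsScaleFunction ψ C β₁ β₂) :
    AntitoneOn (fun x => 1 / ψ x) (Ioi 0) := fun _ hx _ hy hxy =>
  one_div_le_one_div_of_le (hψ.pos hx) (hψ.strictMonoOn.monotoneOn (mem_Ici_of_Ioi hx)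
    (mem_Ici_of_Ioi hy) hxy)

theorem aemeasurable_one_div (hψ : IsScaleFunction ψ C β₁ β₂) :
    AEMeasurable (fun x => 1 / ψ x) (volume.restrict (Ioo 0 1)) :=
  aemeasurable_restrict_of_antitoneOn measurableSet_Ioo
    (hψ.antitoneOn_one_div.mono Ioo_subset_Ioi_self)

theorem div_le_mul_rpow (hψ : IsScaleFunction ψ C β₁ β₂) {s u : ℝ} (hs : 0 < s) (hsu : s ≤ u) :
    ψ s / s ≤ C * ψ u / u ^ β₁ * s ^ (β₁ - 1) := by
  have hu : 0 < u := hs.trans_le hsu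
  have hC : 0 < C := zero_lt_one.trans_le hψ.1
  have hlow := (hψ.2.2.2.2.2.2.2 s u hs hsu).1
  rw [Real.div_rpow hu.le hs.le, ← mul_div_assoc, inv_mul_eq_div, div_div,
    div_le_div_iff₀ (by positivity) (hψ.pos hs)] at hlow
  calc ψ s / s = ψ s * u ^ β₁ / (u ^ β₁ * s) := by field_simp
    _ ≤ C * ψ u * s ^ β₁ / (u ^ β₁ * s) := div_le_div_of_nonneg_right (by linarith) (by positivity)
    _ = C * ψ u / u ^ β₁ * s ^ (β₁ - 1) := by rw [Real.rpow_sub_one hs.ne']; field_simp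

theorem le_mul_map_half (hψ : IsScaleFunction ψ C β₁ β₂) {u : ℝ} (hu : 0 < u) :
    ψ u ≤ C * 2 ^ β₂ * ψ (u / 2) := by
  have h := (hψ.2.2.2.2.2.2.2 (u / 2) u (half_pos hu) (half_le_self hu.le)).2
  rwa [div_div_cancel₀ hu.ne', div_le_iff₀ (hψ.pos (half_pos hu))] at h

theorem setLIntegral_Ioo_div_le (hψ : IsScaleFunction ψ C β₁ β₂) {u : ℝ} (hu : 0 < u) :
    ∫⁻ s in Ioo 0 u, ENNReal.ofReal (ψ s / s) ≤ ENNReal.ofReal (C / β₁ * ψ u) := by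
  have hC : 0 < C := zero_lt_one.trans_le hψ.1
  have hβ₁ : 0 < β₁ := hψ.2.1
  have hψu := hψ.pos hu
  calc ∫⁻ s in Ioo 0 u, ENNReal.ofReal (ψ s / s)
      ≤ ∫⁻ s in Ioo 0 u, ENNReal.ofReal (C * ψ u / u ^ β₁) * ENNReal.ofReal (s ^ (β₁ - 1)) :=
        setLIntegral_mono' measurableSet_Ioo fun s hs => by
          rw [← ENNReal.ofReal_mul (by positivity)]
          exact ENNReal.ofReal_le_ofReal (hψ.div_le_mul_rpow hs.1 hs.2.le)
    _ = ENNReal.ofReal (C * ψ u / u ^ β₁) * ENNReal.ofReal (u ^ β₁ / β₁) := by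
        rw [lintegral_const_mul' _ _ ENNReal.ofReal_ne_top, setLIntegral_Ioo_rpow_sub_one hβ₁ hu.le]
    _ = ENNReal.ofReal (C / β₁ * ψ u) := by
        rw [← ENNReal.ofReal_mul (by positivity)]
        congr 1
        field_simp

theorem ofReal_le_mul_setLIntegral_Ioo_div (hψ : IsScaleFunction ψ C β₁ β₂) {u : ℝ}
    (hu : 0 < u) :
    ENNReal.ofReal (ψ u) ≤
      ENNReal.ofReal (2 * C * 2 ^ β₂) * ∫⁻ s in Ioo 0 u, ENNReal.ofReal (ψ s / s) := by
  have hC : 0 < C := zero_lt_one.trans_le hψ.1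
  have hu2 : 0 < u / 2 := half_pos hu
  have hψu2 := hψ.pos hu2
  calc ENNReal.ofReal (ψ u)
      ≤ ENNReal.ofReal (2 * C * 2 ^ β₂) * ENNReal.ofReal (ψ (u / 2) / u * (u - u / 2)) := by
        rw [← ENNReal.ofReal_mul (by positivity)]
        refine ENNReal.ofReal_le_ofReal ((hψ.le_mul_map_half hu).trans_eq ?_)
        field_simp
        ring
    _ = ENNReal.ofReal (2 * C * 2 ^ β₂) *
          ∫⁻ _ in Ioo (u / 2) u, ENNReal.ofReal (ψ (u / 2) / u) := by
        rw [setLIntegral_const, Real.volume_Ioo, ENNReal.ofReal_mul (div_nonneg hψu2.le hu.le)]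
    _ ≤ ENNReal.ofReal (2 * C * 2 ^ β₂) * ∫⁻ s in Ioo (u / 2) u, ENNReal.ofReal (ψ s / s) := by
        refine mul_le_mul_right (setLIntegral_mono' measurableSet_Ioo fun s hs => ?_) _
        have hs0 : 0 < s := hu2.trans hs.1
        refine ENNReal.ofReal_le_ofReal (div_le_div₀ (hψ.pos hs0).le ?_ hs0 hs.2.le)
        exact hψ.strictMonoOn.monotoneOn hu2.le hs0.le hs.1.le
    _ ≤ ENNReal.ofReal (2 * C * 2 ^ β₂) * ∫⁻ s in Ioo 0 u, ENNReal.ofReal (ψ s / s) := by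
        exact mul_le_mul_right (lintegral_mono_set (Ioo_subset_Ioo_left hu2.le)) _

theorem setLIntegral_Ioo_min_one_div_le (hψ : IsScaleFunction ψ C β₁ β₂) {m : ℝ} (hm : 0 < m) :
    ∫⁻ s in Ioo 0 (min 1 m), ENNReal.ofReal (ψ s / s) ≤
      ENNReal.ofReal (C / β₁ * max (ψ 1) 1) * ENNReal.ofReal (min 1 (ψ m)) := by
  have hC : 0 < C := zero_lt_one.trans_le hψ.1
  have hβ₁ : 0 < β₁ := hψ.2.1
  calc ∫⁻ s in Ioo 0 (min 1 m), ENNReal.ofReal (ψ s / s)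
      ≤ ENNReal.ofReal (C / β₁ * ψ (min 1 m)) := hψ.setLIntegral_Ioo_div_le (lt_min one_pos hm)
    _ ≤ ENNReal.ofReal (C / β₁ * (max (ψ 1) 1 * min 1 (ψ m))) := by
        rw [hψ.map_min_one hm.le]
        gcongr
        exact min_le_max_one_mul_min_one (hψ.pos hm).le
    _ = ENNReal.ofReal (C / β₁ * max (ψ 1) 1) * ENNReal.ofReal (min 1 (ψ m)) := by
        rw [← mul_assoc, ENNReal.ofReal_mul (by positivity)]

theorem ofReal_min_one_le_mul_setLIntegral_Ioo_div (hψ : IsScaleFunction ψ C β₁ β₂) {m : ℝ}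
    (hm : 0 < m) :
    ENNReal.ofReal (min 1 (ψ m)) ≤ ENNReal.ofReal (max 1 (ψ 1)⁻¹) *
      ENNReal.ofReal (2 * C * 2 ^ β₂) * ∫⁻ s in Ioo 0 (min 1 m), ENNReal.ofReal (ψ s / s) := by
  calc ENNReal.ofReal (min 1 (ψ m))
      ≤ ENNReal.ofReal (max 1 (ψ 1)⁻¹) * ENNReal.ofReal (ψ (min 1 m)) := by
        rw [← ENNReal.ofReal_mul (zero_le_one.trans (le_max_left _ _)), hψ.map_min_one hm.le]
        exact ENNReal.ofReal_le_ofReal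
          (min_one_le_max_one_inv_mul_min (hψ.pos one_pos) (hψ.pos hm).le)
    _ ≤ _ := by
        rw [mul_assoc]
        exact mul_le_mul_right (hψ.ofReal_le_mul_setLIntegral_Ioo_div (lt_min one_pos hm)) _

theorem rightInverse_pos (hψ : IsScaleFunction ψ C β₁ β₂) {ψinv : ℝ → ℝ}
    (hinv : ∀ y, 0 ≤ y → ψ (ψinv y) = y) (hinv_nonneg : ∀ y, 0 ≤ y → 0 ≤ ψinv y) {t : ℝ}
    (ht : 0 < t) : 0 < ψinv t := by
  refine (hinv_nonneg t ht.le).lt_of_ne fun h => ht.ne' ?_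
  rw [← hinv t ht.le, ← h, hψ.2.2.2.1]

theorem rightInverse_lt_iff (hψ : IsScaleFunction ψ C β₁ β₂) {ψinv : ℝ → ℝ}
    (hinv : ∀ y, 0 ≤ y → ψ (ψinv y) = y) (hinv_nonneg : ∀ y, 0 ≤ y → 0 ≤ ψinv y) {t m : ℝ}
    (ht : 0 ≤ t) (hm : 0 ≤ m) : ψinv t < m ↔ t < ψ m := by
  conv_rhs => rw [← hinv t ht]
  exact (hψ.strictMonoOn.lt_iff_lt (hinv_nonneg t ht) hm).symm

theorem rightInverse_monotoneOn (hψ : IsScaleFunction ψ C β₁ β₂) {ψinv : ℝ → ℝ}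
    (hinv : ∀ y, 0 ≤ y → ψ (ψinv y) = y) (hinv_nonneg : ∀ y, 0 ≤ y → 0 ≤ ψinv y) :
    MonotoneOn ψinv (Ici 0) := fun a ha _ hb hab => not_lt.1 fun h =>
  hab.not_gt (((hψ.rightInverse_lt_iff hinv hinv_nonneg hb (hinv_nonneg a ha)).1 h).trans_eq
    (hinv a ha))

end IsScaleFunction

noncomputable def scaleMeasure (ψ : ℝ → ℝ) : Measure ℝ :=
  (volume.restrict (Ioo 0 1)).withDensity fun s => ENNReal.ofReal (ψ s / s)

theorem scaleMeasure_apply (ψ : ℝ → ℝ) (S : Set ℝ) :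
    scaleMeasure ψ S = ∫⁻ s in S ∩ Ioo 0 1, ENNReal.ofReal (ψ s / s) := by
  rw [scaleMeasure, withDensity_apply', Measure.restrict_restrict' measurableSet_Ioo]

section Comparison

variable {ψc ψcinv ψj : ℝ → ℝ} {Cc β₁c β₂c Cj β₁j β₂j : ℝ}

theorem IsScaleFunction.integrableOn_div_mul_iff (hψc : IsScaleFunction ψc Cc β₁c β₂c)
    (hψj : IsScaleFunction ψj Cj β₁j β₂j) :
    IntegrableOn (fun s => ψc s / (s * ψj s)) (Ioo 0 1) ↔
      ∫⁻ s, ENNReal.ofReal (1 / ψj s) ∂scaleMeasure ψc < ∞ := by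
  have hd : AEMeasurable (fun s => ψc s / s) (volume.restrict (Ioo 0 1)) :=
    ((hψc.continuousOn.mono (Ioo_subset_Ioi_self.trans Ioi_subset_Ici_self)).div
      continuousOn_id fun s hs => hs.1.ne').aemeasurable measurableSet_Ioo
  have hw := hψj.aemeasurable_one_div
  have hsplit : (fun s => ψc s / (s * ψj s)) = fun s => ψc s / s * (1 / ψj s) := by
    ext s
    rw [div_mul_div_comm, mul_one]
  rw [hsplit, integrableOn_iff_setLIntegral_ofReal_lt_top
    (f := fun s => ψc s / s * (1 / ψj s)) (hd.mul hw).aestronglyMeasurable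
    (ae_restrict_of_forall_mem measurableSet_Ioo fun s hs =>
      mul_nonneg (div_nonneg (hψc.pos hs.1).le hs.1.le) (one_div_pos.2 (hψj.pos hs.1)).le),
    setLIntegral_congr_fun measurableSet_Ioo fun s hs =>
      ENNReal.ofReal_mul (div_nonneg (hψc.pos hs.1).le hs.1.le),
    scaleMeasure, lintegral_withDensity_eq_lintegral_mul₀ hd.ennreal_ofReal hw.ennreal_ofReal]
  rfl

theorem IsScaleFunction.antitoneOn_one_div_comp_rightInverse
    (hψc : IsScaleFunction ψc Cc β₁c β₂c) (hψj : IsScaleFunction ψj Cj β₁j β₂j)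
    (hinv : ∀ y, 0 ≤ y → ψc (ψcinv y) = y) (hinv_nonneg : ∀ y, 0 ≤ y → 0 ≤ ψcinv y) :
    AntitoneOn (fun t => 1 / ψj (ψcinv t)) (Ioi 0) :=
  hψj.antitoneOn_one_div.comp_MonotoneOn
    ((hψc.rightInverse_monotoneOn hinv hinv_nonneg).mono Ioi_subset_Ici_self)
    fun _ ht => hψc.rightInverse_pos hinv hinv_nonneg ht

theorem scaleMeasure_setOf_lt_one_div (ψc : ℝ → ℝ) (hψj : IsScaleFunction ψj Cj β₁j β₂j)
    {l m : ℝ} (hl : 0 < l) (hm : 0 ≤ m) (hψm : ψj m = 1 / l) :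
    scaleMeasure ψc {s | l < 1 / ψj s} = ∫⁻ s in Ioo 0 (min 1 m), ENNReal.ofReal (ψc s / s) := by
  rw [scaleMeasure_apply,
    setOf_inter_Ioo_eq_Ioo_min fun s hs => hψj.lt_one_div_iff hl hm hψm hs]

theorem volume_setOf_lt_one_div_rightInverse (hψc : IsScaleFunction ψc Cc β₁c β₂c)
    (hψj : IsScaleFunction ψj Cj β₁j β₂j) (hinv : ∀ y, 0 ≤ y → ψc (ψcinv y) = y)
    (hinv_nonneg : ∀ y, 0 ≤ y → 0 ≤ ψcinv y) {l m : ℝ} (hl : 0 < l) (hm : 0 ≤ m)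
    (hψm : ψj m = 1 / l) :
    volume.restrict (Ioo 0 1) {t | l < 1 / ψj (ψcinv t)} = ENNReal.ofReal (min 1 (ψc m)) := by
  have hset : {t | l < 1 / ψj (ψcinv t)} ∩ Ioo 0 1 = Ioo 0 (min 1 (ψc m)) :=
    setOf_inter_Ioo_eq_Ioo_min fun t ht => by
      rw [hψj.lt_one_div_iff hl hm hψm (hψc.rightInverse_pos hinv hinv_nonneg ht),
        hψc.rightInverse_lt_iff hinv hinv_nonneg ht.le hm]
  rw [Measure.restrict_apply' measurableSet_Ioo, hset, Real.volume_Ioo, sub_zero]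

theorem volume_setOf_lt_le_mul_scaleMeasure (hψc : IsScaleFunction ψc Cc β₁c β₂c)
    (hψj : IsScaleFunction ψj Cj β₁j β₂j) (hinv : ∀ y, 0 ≤ y → ψc (ψcinv y) = y)
    (hinv_nonneg : ∀ y, 0 ≤ y → 0 ≤ ψcinv y) {l : ℝ} (hl : 0 < l) :
    volume.restrict (Ioo 0 1) {t | l < 1 / ψj (ψcinv t)} ≤
      ENNReal.ofReal (max 1 (ψc 1)⁻¹) * ENNReal.ofReal (2 * Cc * 2 ^ β₂c) *
        scaleMeasure ψc {s | l < 1 / ψj s} := by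
  obtain ⟨m, hm, hψm⟩ := hψj.exists_pos_eq (one_div_pos.2 hl)
  rw [volume_setOf_lt_one_div_rightInverse hψc hψj hinv hinv_nonneg hl hm.le hψm,
    scaleMeasure_setOf_lt_one_div ψc hψj hl hm.le hψm]
  exact hψc.ofReal_min_one_le_mul_setLIntegral_Ioo_div hm

theorem scaleMeasure_setOf_lt_le_mul_volume (hψc : IsScaleFunction ψc Cc β₁c β₂c)
    (hψj : IsScaleFunction ψj Cj β₁j β₂j) (hinv : ∀ y, 0 ≤ y → ψc (ψcinv y) = y)
    (hinv_nonneg : ∀ y, 0 ≤ y → 0 ≤ ψcinv y) {l : ℝ} (hl : 0 < l) :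
    scaleMeasure ψc {s | l < 1 / ψj s} ≤ ENNReal.ofReal (Cc / β₁c * max (ψc 1) 1) *
      volume.restrict (Ioo 0 1) {t | l < 1 / ψj (ψcinv t)} := by
  obtain ⟨m, hm, hψm⟩ := hψj.exists_pos_eq (one_div_pos.2 hl)
  rw [volume_setOf_lt_one_div_rightInverse hψc hψj hinv hinv_nonneg hl hm.le hψm,
    scaleMeasure_setOf_lt_one_div ψc hψj hl hm.le hψm]
  exact hψc.setLIntegral_Ioo_min_one_div_le hm

end Comparison

theorem integrability_change_of_variables_general (ψc ψcinv ψj : ℝ → ℝ)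
    (Cc β₁c β₂c Cj β₁j β₂j : ℝ)
    (hψc : IsScaleFunction ψc Cc β₁c β₂c)
    (hψj : IsScaleFunction ψj Cj β₁j β₂j)
    (hinv₂ : ∀ y, 0 ≤ y → ψc (ψcinv y) = y)
    (hinv₃ : ∀ y, 0 ≤ y → 0 ≤ ψcinv y) :
    IntegrableOn (fun s => ψc s / (s * ψj s)) (Ioo 0 1) volume ↔
    IntegrableOn (fun t => 1 / ψj (ψcinv t)) (Ioo 0 1) volume := by
  have hac : scaleMeasure ψc ≪ volume.restrict (Ioo 0 1) := withDensity_absolutelyContinuous _ _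
  have hw := hψj.aemeasurable_one_div
  have hw0 : 0 ≤ᵐ[volume.restrict (Ioo 0 1)] fun s => 1 / ψj s :=
    ae_restrict_of_forall_mem measurableSet_Ioo fun s hs => (one_div_pos.2 (hψj.pos hs.1)).le
  have hg : AEMeasurable (fun t => 1 / ψj (ψcinv t)) (volume.restrict (Ioo 0 1)) :=
    aemeasurable_restrict_of_antitoneOn measurableSet_Ioo
      ((hψc.antitoneOn_one_div_comp_rightInverse hψj hinv₂ hinv₃).mono Ioo_subset_Ioi_self)
  have hg0 : 0 ≤ᵐ[volume.restrict (Ioo 0 1)] fun t => 1 / ψj (ψcinv t) :=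
    ae_restrict_of_forall_mem measurableSet_Ioo fun t ht =>
      (one_div_pos.2 (hψj.pos (hψc.rightInverse_pos hinv₂ hinv₃ ht.1))).le
  rw [hψc.integrableOn_div_mul_iff hψj,
    integrableOn_iff_setLIntegral_ofReal_lt_top hg.aestronglyMeasurable hg0]
  constructor
  · refine fun h => (lintegral_ofReal_le_mul_of_meas_lt_le hg0 hg (hac.ae_le hw0) (hw.mono_ac hac)
      fun l hl => volume_setOf_lt_le_mul_scaleMeasure hψc hψj hinv₂ hinv₃ hl).trans_lt ?_
    exact ENNReal.mul_lt_top (ENNReal.mul_lt_top ENNReal.ofReal_lt_top ENNReal.ofReal_lt_top) h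
  · refine fun h => (lintegral_ofReal_le_mul_of_meas_lt_le (hac.ae_le hw0) (hw.mono_ac hac) hg0 hg
      fun l hl => scaleMeasure_setOf_lt_le_mul_volume hψc hψj hinv₂ hinv₃ hl).trans_lt ?_
    exact ENNReal.mul_lt_top ENNReal.ofReal_lt_top h

theorem integrability_change_of_variables (ψc ψcinv ψj : ℝ → ℝ)
    (Cc β₁c β₂c Cj β₁j β₂j : ℝ)
    (hψc : IsScaleFunction ψc Cc β₁c β₂c)
    (hψj : IsScaleFunction ψj Cj β₁j β₂j)
    (hinv₁ : ∀ x, 0 ≤ x → ψcinv (ψc x) = x)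
    (hinv₂ : ∀ y, 0 ≤ y → ψc (ψcinv y) = y)
    (hinv₃ : ∀ y, 0 ≤ y → 0 ≤ ψcinv y) :
    IntegrableOn (fun s => ψc s / (s * ψj s)) (Ioo 0 1) volume ↔
    IntegrableOn (fun t => 1 / ψj (ψcinv t)) (Ioo 0 1) volume :=
  integrability_change_of_variables_general ψc ψcinv ψj Cc β₁c β₂c Cj β₁j β₂j hψc hψj hinv₂ hinv₃
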